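/- Let H be an RKHS on an open, bounded set Ω ⊆ ℝ^d with reproducing kernel k satisfying the kernel differentiability assumption of order s, and let D be a linear differential operator of order s with continuous, uniformly bounded coefficients. Then for any points x₁, …, x_n ∈ Ω and z₁, …, z_m ∈ Ω, the (n+m) × (n+m) block matrix [[K_{xx}, H_{xz}], [H_{xz}ᵀ, G_{zz}]], where [K_{xx}]_{ij} = k(x_i, x_j), [H_{xz}]_{ij} = (Id ⊗ D)k(x_i, z_j), and [G_{zz}]_{ij} = (D ⊗ D)k(z_i, z_j), is symmetric positive semidefinite. -/

import Mathlib

open scoped BigOperators RealInnerProductSpace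

/-- Partial derivative of `f` in coordinate direction `i`. -/
noncomputable def pderiv' {d : ℕ} (i : Fin d) (f : (Fin d → ℝ) → ℝ) :
    (Fin d → ℝ) → ℝ :=
  fun x => deriv (fun t => f (Function.update x i t)) (x i)

/-- The list of coordinate directions encoded by the multi-index `α`. -/
def pdSeq {d : ℕ} (α : Fin d → ℕ) : List (Fin d) :=
  (List.ofFn fun i : Fin d => List.replicate (α i) i).flatten

/-- The iterated partial derivative `∂^α f`. -/
noncomputable def multiPD {d : ℕ} (α : Fin d → ℕ) (f : (Fin d → ℝ) → ℝ) :
    (Fin d → ℝ) → ℝ :=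
  (pdSeq α).foldr pderiv' f

/-- `f` has a partial derivative in direction `i` at every point of `Ω`. -/
def PDiffOn {d : ℕ} (Ω : Set (Fin d → ℝ)) (i : Fin d) (f : (Fin d → ℝ) → ℝ) : Prop :=
  ∀ x ∈ Ω, DifferentiableAt ℝ (fun t => f (Function.update x i t)) (x i)

/-- All of the successive partial derivatives building `∂^α f` exist on `Ω`. -/
def MultiPDiffOn {d : ℕ} (Ω : Set (Fin d → ℝ)) (α : Fin d → ℕ)
    (f : (Fin d → ℝ) → ℝ) : Prop :=
  ∀ l₁ (i : Fin d) l₂, pdSeq α = l₁ ++ i :: l₂ →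
    PDiffOn Ω i (l₂.foldr pderiv' f)

/-- `∂₂^α k`: iterated partial derivative in the second argument of a kernel. -/
noncomputable def pd2 {d : ℕ} (α : Fin d → ℕ) (k : (Fin d → ℝ) → (Fin d → ℝ) → ℝ) :
    (Fin d → ℝ) → (Fin d → ℝ) → ℝ :=
  fun x y => multiPD α (fun y' => k x y') y

/-- `∂₁^α ∂₂^α k`: mixed iterated partial derivative of a kernel. -/
noncomputable def kmix {d : ℕ} (α : Fin d → ℕ) (k : (Fin d → ℝ) → (Fin d → ℝ) → ℝ) :
    (Fin d → ℝ) → (Fin d → ℝ) → ℝ :=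
  fun x y => multiPD α (fun x' => pd2 α k x' y) x

/-- Kernel differentiability assumption of order `s`: all mixed partial derivatives
`∂₁^α ∂₂^α k` with `‖α‖₁ ≤ s` exist and are continuous on `Ω × Ω`. -/
def KernelDiff {d : ℕ} (Ω : Set (Fin d → ℝ)) (s : ℕ)
    (k : (Fin d → ℝ) → (Fin d → ℝ) → ℝ) : Prop :=
  ∀ α : Fin d → ℕ, (∑ i, α i) ≤ s →
    (∀ x ∈ Ω, MultiPDiffOn Ω α (fun y => k x y)) ∧
    (∀ y ∈ Ω, MultiPDiffOn Ω α (fun x => pd2 α k x y)) ∧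
    ContinuousOn (fun p : (Fin d → ℝ) × (Fin d → ℝ) => kmix α k p.1 p.2) (Ω ×ˢ Ω)

/-- The linear differential operator of order `s` with coefficients `c`:
`D f (x) = ∑_{‖α‖₁ ≤ s} c_α(x) ∂^α f(x)`. -/
noncomputable def Dop {d : ℕ} (s : ℕ) (c : (Fin d → ℕ) → (Fin d → ℝ) → ℝ)
    (f : (Fin d → ℝ) → ℝ) : (Fin d → ℝ) → ℝ :=
  fun x => ∑ α : Fin d → Fin (s + 1),
    if (∑ i, (α i : ℕ)) ≤ s then
      c (fun i => (α i : ℕ)) x * multiPD (fun i => (α i : ℕ)) f x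
    else 0

/-- The coefficients of the differential operator are continuous and uniformly bounded on `Ω`. -/
def CoeffCBdd {d : ℕ} (Ω : Set (Fin d → ℝ)) (s : ℕ)
    (c : (Fin d → ℕ) → (Fin d → ℝ) → ℝ) : Prop :=
  ∀ α : Fin d → ℕ, (∑ i, α i) ≤ s →
    ContinuousOn (c α) Ω ∧ ∃ C : ℝ, ∀ x ∈ Ω, |c α x| ≤ C

/-- `(D ⊗ Id) k`: the operator applied to the first argument of the kernel. -/
noncomputable def DIdk {d : ℕ} (s : ℕ) (c : (Fin d → ℕ) → (Fin d → ℝ) → ℝ)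
    (k : (Fin d → ℝ) → (Fin d → ℝ) → ℝ) : (Fin d → ℝ) → (Fin d → ℝ) → ℝ :=
  fun x z => Dop s c (fun x' => k x' z) x

/-- `(Id ⊗ D) k`: the operator applied to the second argument of the kernel. -/
noncomputable def IdDk {d : ℕ} (s : ℕ) (c : (Fin d → ℕ) → (Fin d → ℝ) → ℝ)
    (k : (Fin d → ℝ) → (Fin d → ℝ) → ℝ) : (Fin d → ℝ) → (Fin d → ℝ) → ℝ :=
  fun x z => Dop s c (fun z' => k x z') z

/-- `(D ⊗ D) k`: the operator applied to both arguments of the kernel. -/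
noncomputable def DDk {d : ℕ} (s : ℕ) (c : (Fin d → ℕ) → (Fin d → ℝ) → ℝ)
    (k : (Fin d → ℝ) → (Fin d → ℝ) → ℝ) : (Fin d → ℝ) → (Fin d → ℝ) → ℝ :=
  fun z z' => Dop s c (fun u => Dop s c (fun v => k u v) z') z

/-!
Write `k x y = ⟪Φ x, Φ y⟫`. For a list of directions `L`, the iterated difference quotients of
`Φ` at `z` form a Cauchy net as the steps shrink: by the mean value theorem, applied first in the
second and then in the first variable, the inner product of two of them is a value of the mixed
derivative `∂₁^L ∂₂^L k` near `(z, z)`, which is continuous. The limit `Ψ_{j :: L} z` is also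
the derivative of `Ψ_L` in direction `j` at `z`, so by induction on `L` the limit `Ψ_L`
represents `∂^L`: `∂^L ⟪f, Φ ·⟫ z = ⟪f, Ψ_L z⟫` for every `f`. Consequently
`(Id ⊗ D) k x z = ⟪Φ x, w z⟫` and `(D ⊗ D) k z z' = ⟪w z, w z'⟫` with `w z = ∑ c_α z • Ψ_α z`,
so the block matrix is the Gram matrix of `Φ x₁, …, Φ xₙ, w z₁, …, w zₘ`.
-/

namespace KernelFeature

open Filter Topology Metric Set

variable {d : ℕ}

def unitVec (i : Fin d) : Fin d → ℝ := Pi.single i 1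

lemma norm_smul_unitVec (t : ℝ) (i : Fin d) : ‖t • unitVec i‖ = |t| := by
  rw [norm_smul, unitVec, Pi.norm_single, norm_one, mul_one, Real.norm_eq_abs]

lemma closedBall_add_smul_unitVec_subset (z : Fin d → ℝ) (i : Fin d) (t : ℝ) {τ : ℝ}
    (ht : |t| ≤ τ) (r : ℝ) : closedBall (z + t • unitVec i) r ⊆ closedBall z (r + τ) := by
  intro y hy
  have := dist_triangle y (z + t • unitVec i) z
  rw [dist_self_add_left, norm_smul_unitVec] at this
  rw [mem_closedBall] at hy ⊢
  linarith

lemma update_eq_add_smul (z : Fin d → ℝ) (i : Fin d) (t : ℝ) :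
    Function.update z i t = z + (t - z i) • unitVec i := by
  ext j
  rcases eq_or_ne j i with rfl | hj
  · simp [unitVec]
  · simp [unitVec, hj]

lemma pderiv'_eq_lineDeriv (i : Fin d) (f : (Fin d → ℝ) → ℝ) (z : Fin d → ℝ) :
    pderiv' i f z = lineDeriv ℝ f z (unitVec i) := by
  simp only [pderiv', lineDeriv, update_eq_add_smul]
  rw [deriv_comp_sub_const (f := fun t => f (z + t • unitVec i)), sub_self]

lemma pdiffOn_iff {Ω : Set (Fin d → ℝ)} {i : Fin d} {f : (Fin d → ℝ) → ℝ} :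
    PDiffOn Ω i f ↔ ∀ z ∈ Ω, LineDifferentiableAt ℝ f z (unitVec i) := by
  simp only [PDiffOn, LineDifferentiableAt, update_eq_add_smul]
  refine forall₂_congr fun z _ => ?_
  rw [differentiableAt_comp_sub_const (f := fun t => f (z + t • unitVec i)), sub_self]

lemma PDiffOn.hasLineDerivAt {Ω : Set (Fin d → ℝ)} {i : Fin d} {f : (Fin d → ℝ) → ℝ}
    (h : PDiffOn Ω i f) {z : Fin d → ℝ} (hz : z ∈ Ω) :
    HasLineDerivAt ℝ f (pderiv' i f z) z (unitVec i) := by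
  rw [pderiv'_eq_lineDeriv]
  exact (pdiffOn_iff.1 h z hz).hasLineDerivAt

lemma pderiv'_eq_of_hasLineDerivAt {i : Fin d} {f : (Fin d → ℝ) → ℝ} {z : Fin d → ℝ} {a : ℝ}
    (h : HasLineDerivAt ℝ f a z (unitVec i)) : pderiv' i f z = a := by
  rw [pderiv'_eq_lineDeriv, h.lineDeriv]

lemma HasLineDerivAt.hasDerivAt_line {E F : Type*} [NormedAddCommGroup E] [NormedSpace ℝ E]
    [NormedAddCommGroup F] [NormedSpace ℝ F] {f : E → F} {f' : F} {z v : E} {t₀ : ℝ}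
    (h : HasLineDerivAt ℝ f f' (z + t₀ • v) v) :
    HasDerivAt (fun t : ℝ => f (z + t • v)) f' t₀ := by
  have := HasDerivAt.comp_sub_const t₀ t₀ (by rwa [sub_self])
  refine this.congr_of_eventuallyEq (Eventually.of_forall fun t => ?_)
  simp only [add_assoc, ← add_smul, add_sub_cancel]

section OpenSet

variable {Ω : Set (Fin d → ℝ)}

lemma pderiv'_congr_of_eqOn (hΩ : IsOpen Ω) {f g : (Fin d → ℝ) → ℝ} (h : EqOn f g Ω) (i : Fin d)
    {z : Fin d → ℝ} (hz : z ∈ Ω) : pderiv' i f z = pderiv' i g z := by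
  simp only [pderiv'_eq_lineDeriv]
  exact (eventuallyEq_of_mem (hΩ.mem_nhds hz) h).lineDeriv_eq

lemma foldr_pderiv'_congr_of_eqOn (hΩ : IsOpen Ω) {f g : (Fin d → ℝ) → ℝ} (h : EqOn f g Ω)
    (L : List (Fin d)) : EqOn (L.foldr pderiv' f) (L.foldr pderiv' g) Ω := by
  induction L with
  | nil => exact h
  | cons i L ih => exact fun z hz => pderiv'_congr_of_eqOn hΩ ih i hz

lemma Dop_congr_of_eqOn (hΩ : IsOpen Ω) {s : ℕ} (c : (Fin d → ℕ) → (Fin d → ℝ) → ℝ)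
    {f g : (Fin d → ℝ) → ℝ} (h : EqOn f g Ω) {z : Fin d → ℝ} (hz : z ∈ Ω) : Dop s c f z = Dop s c g z := by
  simp only [Dop, multiPD, foldr_pderiv'_congr_of_eqOn hΩ h _ hz]

end OpenSet

section Chains

variable {Ω : Set (Fin d → ℝ)}

def ChainPDiffOn (Ω : Set (Fin d → ℝ)) (L : List (Fin d)) (f : (Fin d → ℝ) → ℝ) : Prop :=
  ∀ i l, i :: l <:+ L → PDiffOn Ω i (l.foldr pderiv' f)

lemma MultiPDiffOn.chainPDiffOn {α : Fin d → ℕ} {f : (Fin d → ℝ) → ℝ}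
    (h : MultiPDiffOn Ω α f) : ChainPDiffOn Ω (pdSeq α) f :=
  fun i l ⟨l₁, hl⟩ => h l₁ i l hl.symm

lemma ChainPDiffOn.pdiffOn_of_append_singleton {L : List (Fin d)} {i : Fin d}
    {f : (Fin d → ℝ) → ℝ} (h : ChainPDiffOn Ω (L ++ [i]) f) : PDiffOn Ω i f :=
  h i [] (List.suffix_append L [i])

lemma ChainPDiffOn.pderiv'_of_append_singleton {L : List (Fin d)} {i : Fin d}
    {f : (Fin d → ℝ) → ℝ} (h : ChainPDiffOn Ω (L ++ [i]) f) : ChainPDiffOn Ω L (pderiv' i f) := by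
  rintro j l ⟨l₁, hl⟩
  simpa using h j (l ++ [i]) ⟨l₁, by simp [← hl]⟩

noncomputable def mixedPD (L : List (Fin d)) (k : (Fin d → ℝ) → (Fin d → ℝ) → ℝ)
    (x y : Fin d → ℝ) : ℝ :=
  L.foldr pderiv' (fun x' => L.foldr pderiv' (k x') y) x

structure KernelChainDiff (Ω : Set (Fin d → ℝ)) (k : (Fin d → ℝ) → (Fin d → ℝ) → ℝ)
    (L : List (Fin d)) : Prop where
  right : ∀ x ∈ Ω, ChainPDiffOn Ω L (k x)
  left : ∀ y ∈ Ω, ChainPDiffOn Ω L (fun x => L.foldr pderiv' (k x) y)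
  continuousOn : ContinuousOn (fun p : (Fin d → ℝ) × (Fin d → ℝ) => mixedPD L k p.1 p.2) (Ω ×ˢ Ω)

lemma pairwise_pdSeq (α : Fin d → ℕ) : (pdSeq α).Pairwise (· ≤ ·) := by
  simp only [pdSeq, List.pairwise_flatten, List.mem_ofFn, List.pairwise_ofFn]
  refine ⟨?_, fun i j hij x hx y hy => ?_⟩
  · rintro _ ⟨i, rfl⟩
    exact List.pairwise_replicate.2 (Or.inr le_rfl)
  · rw [List.eq_of_mem_replicate hx, List.eq_of_mem_replicate hy]
    exact hij.le

lemma count_pdSeq (α : Fin d → ℕ) (i : Fin d) : (pdSeq α).count i = α i := by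
  simp [pdSeq, List.count_flatten, List.map_ofFn, Function.comp_def, List.count_replicate,
    List.sum_ofFn]

lemma exists_pdSeq_eq_of_suffix {α : Fin d → ℕ} {L : List (Fin d)} (h : L <:+ pdSeq α) :
    ∃ β ≤ α, pdSeq β = L := by
  refine ⟨fun i => L.count i, fun i => count_pdSeq α i ▸ h.sublist.count_le i, ?_⟩
  refine List.Perm.eq_of_pairwise (fun a b _ _ hab hba => le_antisymm hab hba) (pairwise_pdSeq _)
    ((pairwise_pdSeq α).sublist h.sublist) ?_
  exact List.perm_iff_count.2 fun i => count_pdSeq _ i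

lemma KernelDiff.kernelChainDiff {s : ℕ} {k : (Fin d → ℝ) → (Fin d → ℝ) → ℝ}
    (hk : KernelDiff Ω s k) {α : Fin d → ℕ} (hα : ∑ i, α i ≤ s) {L : List (Fin d)}
    (hL : L <:+ pdSeq α) : KernelChainDiff Ω k L := by
  obtain ⟨β, hβα, rfl⟩ := exists_pdSeq_eq_of_suffix hL
  obtain ⟨hright, hleft, hcont⟩ := hk β ((Finset.sum_le_sum fun i _ => hβα i).trans hα)
  exact ⟨fun x hx => MultiPDiffOn.chainPDiffOn (hright x hx),
    fun y hy => MultiPDiffOn.chainPDiffOn (hleft y hy), hcont⟩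

end Chains

section DiffQuot

variable {E : Type*} [NormedAddCommGroup E] [NormedSpace ℝ E]

/-- A step `(i, t)` is the quotient `(f (z + t eᵢ) - f z) / t`; the head of the list is the
outermost quotient, as for `List.foldr pderiv'`. -/
noncomputable def diffQuot : List (Fin d × ℝ) → ((Fin d → ℝ) → E) → (Fin d → ℝ) → E
  | [], f, z => f z
  | p :: S, f, z => p.2⁻¹ • (diffQuot S f (z + p.2 • unitVec p.1) - diffQuot S f z)

def stepSize (S : List (Fin d × ℝ)) : ℝ := (S.map fun p => |p.2|).sum

@[simp] lemma stepSize_nil : stepSize ([] : List (Fin d × ℝ)) = 0 := rfl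

@[simp] lemma stepSize_cons (p : Fin d × ℝ) (S : List (Fin d × ℝ)) :
    stepSize (p :: S) = |p.2| + stepSize S := by
  simp [stepSize]

@[simp] lemma stepSize_append (S T : List (Fin d × ℝ)) :
    stepSize (S ++ T) = stepSize S + stepSize T := by
  simp [stepSize]

lemma stepSize_nonneg (S : List (Fin d × ℝ)) : 0 ≤ stepSize S :=
  List.sum_nonneg fun _ hx => by obtain ⟨p, -, rfl⟩ := List.mem_map.1 hx; exact abs_nonneg _

lemma diffQuot_append_singleton (S : List (Fin d × ℝ)) (q : Fin d × ℝ) (f : (Fin d → ℝ) → E)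
    (z : Fin d → ℝ) :
    diffQuot (S ++ [q]) f z =
      q.2⁻¹ • (diffQuot S f (z + q.2 • unitVec q.1) - diffQuot S f z) := by
  induction S generalizing z with
  | nil => rfl
  | cons p S ih =>
    simp only [List.cons_append, diffQuot, ih, add_right_comm z (q.2 • _), smul_sub,
      smul_comm p.2⁻¹ q.2⁻¹]
    abel

lemma diffQuot_congr {S : List (Fin d × ℝ)} {f g : (Fin d → ℝ) → E} {z : Fin d → ℝ}
    (h : EqOn f g (closedBall z (stepSize S))) : diffQuot S f z = diffQuot S g z := by
  induction S generalizing z with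
  | nil => exact h (mem_closedBall_self le_rfl)
  | cons p S ih =>
    have hshift := closedBall_add_smul_unitVec_subset z p.1 p.2 le_rfl (stepSize S)
    have hbase : closedBall z (stepSize S) ⊆ closedBall z (stepSize S + |p.2|) :=
      closedBall_subset_closedBall (le_add_of_nonneg_right (abs_nonneg _))
    rw [stepSize_cons, add_comm] at h
    simp only [diffQuot, ih (h.mono hshift), ih (h.mono hbase)]

lemma diffQuot_add_apply (S : List (Fin d × ℝ)) (f : (Fin d → ℝ) → E) (z w : Fin d → ℝ) :
    diffQuot S f (z + w) = diffQuot S (fun u => f (u + w)) z := by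
  induction S generalizing z with
  | nil => rfl
  | cons p S ih => simp only [diffQuot, ← ih, add_right_comm z w]

lemma hasDerivAt_diffQuot_param {S : List (Fin d × ℝ)} {G : (Fin d → ℝ) → ℝ → E}
    {G' : (Fin d → ℝ) → E} {z : Fin d → ℝ} {t₀ : ℝ}
    (h : ∀ u ∈ closedBall z (stepSize S), HasDerivAt (G u) (G' u) t₀) :
    HasDerivAt (fun t => diffQuot S (fun u => G u t) z) (diffQuot S G' z) t₀ := by
  induction S generalizing z with
  | nil => exact h z (mem_closedBall_self le_rfl)
  | cons p S ih =>
    rw [stepSize_cons, add_comm] at h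
    have hshift := ih fun u hu =>
      h u (closedBall_add_smul_unitVec_subset z p.1 p.2 le_rfl (stepSize S) hu)
    have hbase := ih fun u hu =>
      h u (closedBall_subset_closedBall (le_add_of_nonneg_right (abs_nonneg _)) hu)
    exact (hshift.sub hbase).const_smul p.2⁻¹

lemma hasLineDerivAt_diffQuot_param {S : List (Fin d × ℝ)} {g : (Fin d → ℝ) → (Fin d → ℝ) → E}
    {g' : (Fin d → ℝ) → E} {z y v : Fin d → ℝ}
    (h : ∀ u ∈ closedBall z (stepSize S), HasLineDerivAt ℝ (g u) (g' u) y v) :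
    HasLineDerivAt ℝ (fun y => diffQuot S (fun u => g u y) z) (diffQuot S g' z) y v :=
  hasDerivAt_diffQuot_param h

lemma hasLineDerivAt_diffQuot {S : List (Fin d × ℝ)} {f f' : (Fin d → ℝ) → E}
    {z v : Fin d → ℝ} (h : ∀ y ∈ closedBall z (stepSize S), HasLineDerivAt ℝ f (f' y) y v) :
    HasLineDerivAt ℝ (diffQuot S f) (diffQuot S f' z) z v := by
  unfold HasLineDerivAt
  simp only [diffQuot_add_apply S f z]
  exact hasDerivAt_diffQuot_param (G := fun u t => f (u + t • v)) h

end DiffQuot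

lemma exists_mem_uIcc_inv_mul_sub_eq {φ φ' : ℝ → ℝ} {t : ℝ} (ht : t ≠ 0)
    (h : ∀ θ ∈ uIcc 0 t, HasDerivAt φ (φ' θ) θ) :
    ∃ θ ∈ uIcc 0 t, t⁻¹ * (φ t - φ 0) = φ' θ := by
  have hmvt : ∀ a b, a < b → uIcc 0 t = Icc a b →
      ∃ θ ∈ uIcc 0 t, φ' θ = (φ b - φ a) / (b - a) := by
    intro a b hab hI
    rw [hI] at h ⊢
    obtain ⟨θ, hθ, he⟩ := exists_hasDerivAt_eq_slope φ φ' hab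
      (fun x hx => (h x hx).continuousAt.continuousWithinAt)
      (fun x hx => h x (Ioo_subset_Icc_self hx))
    exact ⟨θ, Ioo_subset_Icc_self hθ, he⟩
  rcases ht.lt_or_gt with hlt | hgt
  · obtain ⟨θ, hθ, he⟩ := hmvt t 0 hlt (uIcc_of_ge hlt.le)
    exact ⟨θ, hθ, by rw [he]; field_simp; ring⟩
  · obtain ⟨θ, hθ, he⟩ := hmvt 0 t hgt (uIcc_of_le hgt.le)
    exact ⟨θ, hθ, by rw [he]; field_simp; ring⟩

theorem exists_diffQuot_eq_foldr_pderiv' {Ω : Set (Fin d → ℝ)} {S : List (Fin d × ℝ)}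
    {f : (Fin d → ℝ) → ℝ} {z : Fin d → ℝ} (hf : ChainPDiffOn Ω (S.map Prod.fst) f)
    (hS : ∀ p ∈ S, p.2 ≠ 0) (hΩ : closedBall z (stepSize S) ⊆ Ω) :
    ∃ ξ ∈ closedBall z (stepSize S), diffQuot S f z = (S.map Prod.fst).foldr pderiv' f ξ := by
  induction S using List.reverseRecOn generalizing f z with
  | nil => exact ⟨z, mem_closedBall_self le_rfl, rfl⟩
  | append_singleton S q ih =>
    rw [List.map_append, List.map_singleton] at hf
    have hseg : ∀ θ, |θ| ≤ |q.2| → closedBall (z + θ • unitVec q.1) (stepSize S) ⊆ Ω := by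
      intro θ hθ
      refine (closedBall_add_smul_unitVec_subset z q.1 θ hθ _).trans ?_
      simpa using hΩ
    have habs : ∀ θ ∈ uIcc 0 q.2, |θ| ≤ |q.2| := fun θ hθ => by
      simpa using Set.abs_sub_left_of_mem_uIcc hθ
    have hderiv : ∀ θ ∈ uIcc 0 q.2, HasDerivAt (fun t => diffQuot S f (z + t • unitVec q.1))
        (diffQuot S (pderiv' q.1 f) (z + θ • unitVec q.1)) θ := fun θ hθ =>
      HasLineDerivAt.hasDerivAt_line <| hasLineDerivAt_diffQuot fun y hy =>
        PDiffOn.hasLineDerivAt hf.pdiffOn_of_append_singleton (hseg θ (habs θ hθ) hy)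
    obtain ⟨θ, hθ, hmvt⟩ := exists_mem_uIcc_inv_mul_sub_eq (hS q (by simp)) hderiv
    have hθq := habs θ hθ
    obtain ⟨ξ, hξ, hξeq⟩ := ih hf.pderiv'_of_append_singleton
      (fun p hp => hS p (by simp [hp])) (hseg θ hθq)
    refine ⟨ξ, ?_, ?_⟩
    · simpa using closedBall_add_smul_unitVec_subset z q.1 θ hθq _ hξ
    · rw [diffQuot_append_singleton, smul_eq_mul, List.map_append, List.map_singleton,
        List.foldr_append, List.foldr_cons, List.foldr_nil, ← hξeq]
      simpa using hmvt

section KernelSections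

variable {Ω : Set (Fin d → ℝ)} {L : List (Fin d)} {g : (Fin d → ℝ) → (Fin d → ℝ) → ℝ}
  {S : List (Fin d × ℝ)} {z : Fin d → ℝ}

lemma hasLineDerivAt_of_eqOn_diffQuot (hΩ : IsOpen Ω) (hg : ∀ u ∈ Ω, ChainPDiffOn Ω L (g u))
    (hz : closedBall z (stepSize S) ⊆ Ω) {i : Fin d} {l : List (Fin d)} (hil : i :: l <:+ L)
    {F : (Fin d → ℝ) → ℝ} (hF : EqOn F (fun y => diffQuot S (fun u => l.foldr pderiv' (g u) y) z) Ω)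
    {y : Fin d → ℝ} (hy : y ∈ Ω) :
    HasLineDerivAt ℝ F (diffQuot S (fun u => (i :: l).foldr pderiv' (g u) y) z) y (unitVec i) :=
  (hasLineDerivAt_diffQuot_param fun u hu => PDiffOn.hasLineDerivAt (hg u (hz hu) i l hil) hy)
    |>.congr_of_eventuallyEq (eventuallyEq_of_mem (hΩ.mem_nhds hy) hF)

lemma foldr_pderiv'_diffQuot_eqOn (hΩ : IsOpen Ω) (hg : ∀ u ∈ Ω, ChainPDiffOn Ω L (g u))
    (hz : closedBall z (stepSize S) ⊆ Ω) {l : List (Fin d)} (hl : l <:+ L) :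
    EqOn (l.foldr pderiv' fun y => diffQuot S (fun u => g u y) z)
      (fun y => diffQuot S (fun u => l.foldr pderiv' (g u) y) z) Ω := by
  induction l with
  | nil => exact fun _ _ => rfl
  | cons i l ih =>
    exact fun y hy => pderiv'_eq_of_hasLineDerivAt
      (hasLineDerivAt_of_eqOn_diffQuot hΩ hg hz hl (ih ((l.suffix_cons i).trans hl)) hy)

lemma chainPDiffOn_diffQuot (hΩ : IsOpen Ω) (hg : ∀ u ∈ Ω, ChainPDiffOn Ω L (g u))
    (hz : closedBall z (stepSize S) ⊆ Ω) :
    ChainPDiffOn Ω L fun y => diffQuot S (fun u => g u y) z :=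
  fun i l hil => pdiffOn_iff.2 fun _ hy => (hasLineDerivAt_of_eqOn_diffQuot hΩ hg hz hil
    (foldr_pderiv'_diffQuot_eqOn hΩ hg hz ((l.suffix_cons i).trans hil)) hy).lineDifferentiableAt

end KernelSections

section StepFilter

variable {E : Type*} [NormedAddCommGroup E] [NormedSpace ℝ E]

def stepLists (L : List (Fin d)) : Set (List (Fin d × ℝ)) :=
  {S | S.map Prod.fst = L ∧ ∀ p ∈ S, p.2 ≠ 0}

def stepFilter (L : List (Fin d)) : Filter (List (Fin d × ℝ)) :=
  comap stepSize (𝓝 0) ⊓ 𝓟 (stepLists L)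

lemma hasBasis_stepFilter (L : List (Fin d)) :
    (stepFilter L).HasBasis (0 < ·) fun δ => {S | stepSize S < δ} ∩ stepLists L := by
  refine ((nhds_basis_ball.comap stepSize).inf_principal _).congr (fun _ => Iff.rfl)
    fun δ _ => ?_
  ext S
  simp [abs_of_nonneg (stepSize_nonneg S)]

instance (L : List (Fin d)) : NeBot (stepFilter L) := by
  refine (hasBasis_stepFilter L).neBot_iff.2 fun {δ} hδ => ?_
  set t := δ / (L.length + 1)
  have ht : 0 < t := by positivity
  refine ⟨L.map fun i => (i, t), ?_, by simp [Function.comp_def], by simp [ht.ne']⟩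
  have hsize : stepSize (L.map fun i => (i, t)) = L.length * t := by
    simp [stepSize, Function.comp_def, abs_of_pos ht]
  show stepSize _ < δ
  rw [hsize]
  calc (L.length : ℝ) * t < (L.length + 1) * t := by gcongr; linarith
    _ = δ := by simp only [t]; field_simp

lemma tendsto_diffQuot_stepFilter_nil (Φ : (Fin d → ℝ) → E) (z : Fin d → ℝ) :
    Tendsto (fun S => diffQuot S Φ z) (stepFilter []) (𝓝 (Φ z)) := by
  have hnil : ∀ᶠ S in stepFilter ([] : List (Fin d)), S ∈ stepLists [] :=
    mem_inf_of_right (mem_principal_self _)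
  refine tendsto_const_nhds.congr' (hnil.mono fun S hS => ?_)
  rw [List.map_eq_nil_iff.1 hS.1]
  rfl

theorem hasLineDerivAt_of_tendsto_diffQuot {Ω : Set (Fin d → ℝ)} (hΩ : IsOpen Ω)
    {Φ Ψ : (Fin d → ℝ) → E} {v : E} {j : Fin d} {L : List (Fin d)} {z : Fin d → ℝ} (hz : z ∈ Ω)
    (hΨ : ∀ y ∈ Ω, Tendsto (fun T => diffQuot T Φ y) (stepFilter L) (𝓝 (Ψ y)))
    (hv : Tendsto (fun S => diffQuot S Φ z) (stepFilter (j :: L)) (𝓝 v)) :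
    HasLineDerivAt ℝ Ψ v z (unitVec j) := by
  rw [HasLineDerivAt, hasDerivAt_iff_tendsto_slope, Metric.tendsto_nhdsWithin_nhds]
  intro ε hε
  obtain ⟨δ, hδ, hvδ⟩ := (hasBasis_stepFilter _).mem_iff.1 (hv (ball_mem_nhds v (half_pos hε)))
  obtain ⟨r, hr, hrΩ⟩ := Metric.isOpen_iff.1 hΩ z hz
  refine ⟨min (δ / 2) r, by positivity, fun {s} hs0 hs => ?_⟩
  rw [Real.dist_eq, sub_zero, lt_min_iff] at hs
  have hzs : z + s • unitVec j ∈ Ω := hrΩ (by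
    rw [mem_ball, dist_self_add_left, norm_smul_unitVec]
    exact hs.2)
  have hslope : Tendsto (fun T => diffQuot ((j, s) :: T) Φ z) (stepFilter L)
      (𝓝 (slope (fun t => Ψ (z + t • unitVec j)) 0 s)) := by
    rw [slope_def_module]
    simpa [diffQuot] using ((hΨ _ hzs).sub (hΨ z hz)).const_smul s⁻¹
  have hnear : ∀ᶠ T in stepFilter L, dist (diffQuot ((j, s) :: T) Φ z) v ≤ ε / 2 := by
    filter_upwards [(hasBasis_stepFilter L).mem_of_mem (half_pos hδ)] with T ⟨hTδ, hTL, hT0⟩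
    refine (hvδ ⟨?_, by simp [hTL], ?_⟩).le
    · show stepSize _ < δ
      rw [stepSize_cons]
      linarith [hTδ.out]
    · exact List.forall_mem_cons.2 ⟨hs0, hT0⟩
  exact (le_of_tendsto (hslope.dist tendsto_const_nhds) hnear).trans_lt (half_lt_self hε)

end StepFilter

section Features

variable {H : Type*} [NormedAddCommGroup H] [InnerProductSpace ℝ H]

lemma inner_diffQuot_right (w : H) (S : List (Fin d × ℝ)) (Φ : (Fin d → ℝ) → H)
    (z : Fin d → ℝ) : ⟪w, diffQuot S Φ z⟫ = diffQuot S (fun y => ⟪w, Φ y⟫) z := by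
  induction S generalizing z with
  | nil => rfl
  | cons p S ih => simp only [diffQuot, real_inner_smul_right, inner_sub_right, ih, smul_eq_mul]

lemma inner_diffQuot_left (w : H) (S : List (Fin d × ℝ)) (Φ : (Fin d → ℝ) → H)
    (z : Fin d → ℝ) : ⟪diffQuot S Φ z, w⟫ = diffQuot S (fun y => ⟪Φ y, w⟫) z := by
  induction S generalizing z with
  | nil => rfl
  | cons p S ih => simp only [diffQuot, real_inner_smul_left, inner_sub_left, ih, smul_eq_mul]

lemma norm_sub_sq_le_of_abs_inner_sub_le {a b : H} {c η : ℝ} (haa : |⟪a, a⟫ - c| ≤ η)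
    (hab : |⟪a, b⟫ - c| ≤ η) (hbb : |⟪b, b⟫ - c| ≤ η) : ‖a - b‖ ^ 2 ≤ 4 * η := by
  rw [norm_sub_sq_real, ← real_inner_self_eq_norm_sq, ← real_inner_self_eq_norm_sq]
  linarith [(abs_le.1 haa).2, (abs_le.1 hab).1, (abs_le.1 hbb).2]

variable {Ω : Set (Fin d → ℝ)} {Φ : (Fin d → ℝ) → H} {k : (Fin d → ℝ) → (Fin d → ℝ) → ℝ}
  {L : List (Fin d)}

-- The quotients in the second variable are resolved first: `KernelChainDiff` only provides
-- `∂₁^L` of `∂₂^L k`.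
theorem inner_diffQuot_eq_mixedPD (hΩ : IsOpen Ω) (hkΦ : ∀ x ∈ Ω, ∀ y ∈ Ω, k x y = ⟪Φ x, Φ y⟫)
    (hk : KernelChainDiff Ω k L) {S T : List (Fin d × ℝ)} (hS : S ∈ stepLists L)
    (hT : T ∈ stepLists L) {z z' : Fin d → ℝ} (hSΩ : closedBall z (stepSize S) ⊆ Ω)
    (hTΩ : closedBall z' (stepSize T) ⊆ Ω) :
    ∃ ζ ∈ closedBall z (stepSize S), ∃ ξ ∈ closedBall z' (stepSize T),
      ⟪diffQuot S Φ z, diffQuot T Φ z'⟫ = mixedPD L k ζ ξ := by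
  obtain ⟨rfl, hS0⟩ := hS
  obtain ⟨hTL, hT0⟩ := hT
  have hkernel : ⟪diffQuot S Φ z, diffQuot T Φ z'⟫ =
      diffQuot T (fun y => diffQuot S (fun u => k u y) z) z' := by
    simp only [inner_diffQuot_left, inner_diffQuot_right]
    exact diffQuot_congr fun y hy => diffQuot_congr fun u hu => (hkΦ u (hSΩ hu) y (hTΩ hy)).symm
  obtain ⟨ξ, hξ, hξeq⟩ := exists_diffQuot_eq_foldr_pderiv'
    (hTL ▸ chainPDiffOn_diffQuot hΩ hk.right hSΩ) hT0 hTΩ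
  have hsection := foldr_pderiv'_diffQuot_eqOn hΩ hk.right hSΩ List.suffix_rfl (hTΩ hξ)
  obtain ⟨ζ, hζ, hζeq⟩ := exists_diffQuot_eq_foldr_pderiv' (hk.left ξ (hTΩ hξ)) hS0 hSΩ
  refine ⟨ζ, hζ, ξ, hξ, ?_⟩
  rw [hkernel, hξeq, hTL, hsection]
  exact hζeq

theorem exists_tendsto_diffQuot [CompleteSpace H] (hΩ : IsOpen Ω)
    (hkΦ : ∀ x ∈ Ω, ∀ y ∈ Ω, k x y = ⟪Φ x, Φ y⟫) (hk : KernelChainDiff Ω k L) {z : Fin d → ℝ}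
    (hz : z ∈ Ω) : ∃ v, Tendsto (fun S => diffQuot S Φ z) (stepFilter L) (𝓝 v) := by
  refine cauchy_map_iff_exists_tendsto.1 (Metric.cauchy_iff.2 ⟨inferInstance, fun ε hε => ?_⟩)
  obtain ⟨r, hr, hrΩ⟩ := nhds_basis_closedBall.mem_iff.1 (hΩ.mem_nhds hz)
  obtain ⟨δ, hδ, hcont⟩ := Metric.continuousWithinAt_iff.1 (hk.continuousOn (z, z) ⟨hz, hz⟩)
    (ε ^ 2 / 5) (by positivity)
  set B := {S | stepSize S < min δ r} ∩ stepLists L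
  have hBΩ : ∀ S ∈ B, closedBall z (stepSize S) ⊆ Ω := fun S hS =>
    (closedBall_subset_closedBall (hS.1.out.le.trans (min_le_right _ _))).trans hrΩ
  have hnear : ∀ S ∈ B, ∀ T ∈ B,
      |⟪diffQuot S Φ z, diffQuot T Φ z⟫ - mixedPD L k z z| ≤ ε ^ 2 / 5 := by
    intro S hS T hT
    obtain ⟨ζ, hζ, ξ, hξ, heq⟩ :=
      inner_diffQuot_eq_mixedPD hΩ hkΦ hk hS.2 hT.2 (hBΩ S hS) (hBΩ T hT)
    have hclose : ∀ U ∈ B, ∀ y ∈ closedBall z (stepSize U), dist y z < δ := fun U hU y hy =>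
      (mem_closedBall.1 hy).trans_lt (hU.1.out.trans_le (min_le_left _ _))
    rw [heq, ← Real.dist_eq]
    refine (hcont (x := (ζ, ξ)) ⟨hBΩ S hS hζ, hBΩ T hT hξ⟩ ?_).le
    rw [Prod.dist_eq, max_lt_iff]
    exact ⟨hclose S hS ζ hζ, hclose T hT ξ hξ⟩
  refine ⟨_, image_mem_map ((hasBasis_stepFilter L).mem_of_mem (lt_min hδ hr)), ?_⟩
  rintro _ ⟨S, hS, rfl⟩ _ ⟨T, hT, rfl⟩
  have hsq := norm_sub_sq_le_of_abs_inner_sub_le (hnear S hS S hS) (hnear S hS T hT)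
    (hnear T hT T hT)
  show dist (diffQuot S Φ z) (diffQuot T Φ z) < ε
  rw [dist_eq_norm]
  exact lt_of_pow_lt_pow_left₀ 2 hε.le (by nlinarith)

theorem exists_feature_foldr_pderiv' [CompleteSpace H] (hΩ : IsOpen Ω)
    (hkΦ : ∀ x ∈ Ω, ∀ y ∈ Ω, k x y = ⟪Φ x, Φ y⟫) :
    ∀ L : List (Fin d), (∀ L', L' <:+ L → KernelChainDiff Ω k L') →
      ∃ Ψ : (Fin d → ℝ) → H,
        (∀ z ∈ Ω, Tendsto (fun S => diffQuot S Φ z) (stepFilter L) (𝓝 (Ψ z))) ∧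
        ∀ z ∈ Ω, ∀ f : H, L.foldr pderiv' (fun y => ⟪f, Φ y⟫) z = ⟪f, Ψ z⟫
  | [], _ => ⟨Φ, fun z _ => tendsto_diffQuot_stepFilter_nil Φ z, fun _ _ _ => rfl⟩
  | j :: L, hk => by
    obtain ⟨Ψ', hΨ'lim, hΨ'⟩ := exists_feature_foldr_pderiv' hΩ hkΦ L
      fun L' hL' => hk L' (hL'.trans (L.suffix_cons j))
    choose! Ψ hΨlim using fun z (hz : z ∈ Ω) =>
      exists_tendsto_diffQuot hΩ hkΦ (hk _ List.suffix_rfl) hz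
    refine ⟨Ψ, hΨlim, fun z hz f => ?_⟩
    have hderiv := hasLineDerivAt_of_tendsto_diffQuot hΩ hz hΨ'lim (hΨlim z hz)
    rw [List.foldr_cons, pderiv'_congr_of_eqOn hΩ (fun y hy => hΨ' y hy f) j hz]
    exact pderiv'_eq_of_hasLineDerivAt ((innerSL ℝ f).hasFDerivAt.comp_hasDerivAt 0 hderiv)

theorem KernelDiff.exists_multiPD_inner_eq [CompleteSpace H] {s : ℕ} (hk : KernelDiff Ω s k)
    (hΩ : IsOpen Ω) (hkΦ : ∀ x ∈ Ω, ∀ y ∈ Ω, k x y = ⟪Φ x, Φ y⟫) {α : Fin d → ℕ}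
    (hα : ∑ i, α i ≤ s) :
    ∃ Ψ : (Fin d → ℝ) → H, ∀ z ∈ Ω, ∀ f : H, multiPD α (fun y => ⟪f, Φ y⟫) z = ⟪f, Ψ z⟫ :=
  have ⟨Ψ, _, hΨ⟩ := exists_feature_foldr_pderiv' hΩ hkΦ (pdSeq α)
    fun _ hL => KernelDiff.kernelChainDiff hk hα hL
  ⟨Ψ, hΨ⟩

end Features

section DifferentialOperator

variable {H : Type*} [NormedAddCommGroup H] [InnerProductSpace ℝ H] {s : ℕ} {c : (Fin d → ℕ) → (Fin d → ℝ) → ℝ}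

noncomputable def DopFeature (s : ℕ) (c : (Fin d → ℕ) → (Fin d → ℝ) → ℝ)
    (Ψ : (Fin d → ℕ) → (Fin d → ℝ) → H) (z : Fin d → ℝ) : H :=
  ∑ α : Fin d → Fin (s + 1),
    if ∑ i, (α i : ℕ) ≤ s then c (fun i => α i) z • Ψ (fun i => α i) z else 0

lemma Dop_inner_eq {Φ : (Fin d → ℝ) → H} {Ψ : (Fin d → ℕ) → (Fin d → ℝ) → H} {z : Fin d → ℝ}
    (hΨ : ∀ α : Fin d → ℕ, ∑ i, α i ≤ s → ∀ f : H,
      multiPD α (fun y => ⟪f, Φ y⟫) z = ⟪f, Ψ α z⟫) (f : H) :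
    Dop s c (fun y => ⟪f, Φ y⟫) z = ⟪f, DopFeature s c Ψ z⟫ := by
  simp only [Dop, DopFeature, inner_sum]
  refine Finset.sum_congr rfl fun α _ => ?_
  split_ifs with hα
  · rw [hΨ _ hα, real_inner_smul_right]
  · rw [inner_zero_right]

variable {Ω : Set (Fin d → ℝ)} {Φ : (Fin d → ℝ) → H} {k : (Fin d → ℝ) → (Fin d → ℝ) → ℝ}
  {Ψ : (Fin d → ℕ) → (Fin d → ℝ) → H}

lemma IdDk_eq_inner (hΩ : IsOpen Ω) (hkΦ : ∀ x ∈ Ω, ∀ y ∈ Ω, k x y = ⟪Φ x, Φ y⟫)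
    (hΨ : ∀ α : Fin d → ℕ, ∑ i, α i ≤ s → ∀ z ∈ Ω, ∀ f : H,
      multiPD α (fun y => ⟪f, Φ y⟫) z = ⟪f, Ψ α z⟫) {x z : Fin d → ℝ} (hx : x ∈ Ω) (hz : z ∈ Ω) :
    IdDk s c k x z = ⟪Φ x, DopFeature s c Ψ z⟫ := by
  rw [IdDk, Dop_congr_of_eqOn hΩ c (fun y hy => hkΦ x hx y hy) hz]
  exact Dop_inner_eq (fun α hα => hΨ α hα z hz) _

lemma DDk_eq_inner (hΩ : IsOpen Ω) (hkΦ : ∀ x ∈ Ω, ∀ y ∈ Ω, k x y = ⟪Φ x, Φ y⟫)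
    (hΨ : ∀ α : Fin d → ℕ, ∑ i, α i ≤ s → ∀ z ∈ Ω, ∀ f : H,
      multiPD α (fun y => ⟪f, Φ y⟫) z = ⟪f, Ψ α z⟫) {z z' : Fin d → ℝ} (hz : z ∈ Ω)
    (hz' : z' ∈ Ω) :
    DDk s c k z z' = ⟪DopFeature s c Ψ z, DopFeature s c Ψ z'⟫ := by
  have hsection : EqOn (fun u => Dop s c (fun v => k u v) z')
      (fun u => ⟪DopFeature s c Ψ z', Φ u⟫) Ω := fun u hu =>
    (IdDk_eq_inner hΩ hkΦ hΨ hu hz').trans (real_inner_comm _ _)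
  rw [DDk, Dop_congr_of_eqOn hΩ c hsection hz, Dop_inner_eq (fun α hα => hΨ α hα z hz),
    real_inner_comm]

end DifferentialOperator

open Matrix in
lemma posSemidef_fromBlocks_inner {H : Type*} [NormedAddCommGroup H] [InnerProductSpace ℝ H]
    {m n : Type*} [Finite m] [Finite n] (u : m → H) (v : n → H) :
    (fromBlocks (of fun i j => ⟪u i, u j⟫) (of fun i j => ⟪u i, v j⟫)
      (of fun i j => ⟪u i, v j⟫)ᵀ (of fun i j => ⟪v i, v j⟫)).PosSemidef := by
  have hgram : gram ℝ (Sum.elim u v) = fromBlocks (of fun i j => ⟪u i, u j⟫)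
      (of fun i j => ⟪u i, v j⟫) (of fun i j => ⟪u i, v j⟫)ᵀ (of fun i j => ⟪v i, v j⟫) := by
    ext (i | i) (j | j)
    · rfl
    · rfl
    · exact real_inner_comm _ _
    · rfl
  exact hgram ▸ posSemidef_gram ℝ (Sum.elim u v)

end KernelFeature

open Matrix in
theorem statement_3_general
    {d s : ℕ} {Ω : Set (Fin d → ℝ)}
    (hΩopen : IsOpen Ω)
    {H : Type*} [NormedAddCommGroup H] [InnerProductSpace ℝ H] [CompleteSpace H]
    (Φ : (Fin d → ℝ) → H)
    (k : (Fin d → ℝ) → (Fin d → ℝ) → ℝ)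
    (hkΦ : ∀ x ∈ Ω, ∀ y ∈ Ω, k x y = ⟪Φ x, Φ y⟫)
    (hkdiff : KernelDiff Ω s k)
    (c : (Fin d → ℕ) → (Fin d → ℝ) → ℝ)
    {n m : ℕ} (x : Fin n → (Fin d → ℝ)) (z : Fin m → (Fin d → ℝ))
    (hx : ∀ i, x i ∈ Ω) (hz : ∀ j, z j ∈ Ω) :
    (Matrix.fromBlocks
      (Matrix.of fun i j : Fin n => k (x i) (x j))
      (Matrix.of fun (i : Fin n) (j : Fin m) => IdDk s c k (x i) (z j))
      (Matrix.of fun (i : Fin n) (j : Fin m) => IdDk s c k (x i) (z j))ᵀ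
      (Matrix.of fun i j : Fin m => DDk s c k (z i) (z j))).PosSemidef := by
  choose! Ψ hΨ using fun (α : Fin d → ℕ) (hα : ∑ i, α i ≤ s) =>
    KernelFeature.KernelDiff.exists_multiPD_inner_eq (Φ := Φ) hkdiff hΩopen hkΦ hα
  convert KernelFeature.posSemidef_fromBlocks_inner (fun i => Φ (x i))
    (fun j => KernelFeature.DopFeature s c Ψ (z j)) using 3 <;> ext i j
  · exact hkΦ _ (hx i) _ (hx j)
  · exact KernelFeature.IdDk_eq_inner hΩopen hkΦ hΨ (hx i) (hz j)
  · exact KernelFeature.IdDk_eq_inner hΩopen hkΦ hΨ (hx i) (hz j)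
  · exact KernelFeature.DDk_eq_inner hΩopen hkΦ hΨ (hz i) (hz j)

open Matrix in
/-- The physics-informed Gram block matrix is positive semidefinite.
For points `x₁, …, x_n, z₁, …, z_m ∈ Ω`, the block matrix
`[[K_xx, H_xz], [H_xzᵀ, G_zz]]` with `[K_xx]_{ij} = k(x_i,x_j)`,
`[H_xz]_{ij} = (Id ⊗ D)k(x_i,z_j)`, `[G_zz]_{ij} = (D ⊗ D)k(z_i,z_j)`
is symmetric positive semidefinite. -/
theorem statement_3
    {d s : ℕ} {Ω : Set (Fin d → ℝ)}
    (hΩopen : IsOpen Ω) (hΩbdd : Bornology.IsBounded Ω)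
    {H : Type*} [NormedAddCommGroup H] [InnerProductSpace ℝ H] [CompleteSpace H]
    (ev : H →ₗ[ℝ] ((Fin d → ℝ) → ℝ))
    (hinj : ∀ f g : H, (∀ x ∈ Ω, ev f x = ev g x) → f = g)
    (Φ : (Fin d → ℝ) → H)
    (hrepr : ∀ f : H, ∀ x ∈ Ω, ev f x = ⟪f, Φ x⟫)
    (k : (Fin d → ℝ) → (Fin d → ℝ) → ℝ)
    (hkΦ : ∀ x ∈ Ω, ∀ y ∈ Ω, k x y = ⟪Φ x, Φ y⟫)
    (hkdiff : KernelDiff Ω s k)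
    (c : (Fin d → ℕ) → (Fin d → ℝ) → ℝ)
    (hc : CoeffCBdd Ω s c)
    {n m : ℕ} (x : Fin n → (Fin d → ℝ)) (z : Fin m → (Fin d → ℝ))
    (hx : ∀ i, x i ∈ Ω) (hz : ∀ j, z j ∈ Ω) :
    (Matrix.fromBlocks
      (Matrix.of fun i j : Fin n => k (x i) (x j))
      (Matrix.of fun (i : Fin n) (j : Fin m) => IdDk s c k (x i) (z j))
      (Matrix.of fun (i : Fin n) (j : Fin m) => IdDk s c k (x i) (z j))ᵀ
      (Matrix.of fun i j : Fin m => DDk s c k (z i) (z j))).PosSemidef :=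
  statement_3_general hΩopen Φ k hkΦ hkdiff c x z hx hz
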